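/- arXiv:1708.04794 — 2 statements merged into one kernel-verified Lean document; each statement's English description precedes it below -/
import Mathlib

section
/- Newton's inequality for (n−1)-tuples: for any λ ∈ ℝ^{n-1} and 2 ≤ k ≤ n−1, σ_k(λ)·σ_{k−2}(λ) ≤ ((k−1)(n−k))/(k(n−k+1)) · (σ_{k−1}(λ))². -/
/-!
Newton's inequalities hold for the coefficients of every real-rooted polynomial `p`. By Rolle's
theorem derivatives of real-rooted polynomials are real-rooted, and so are reflections
`X ^ N p(1/X)`. If `p` has degree at most `i + 2 + d`, differentiating it `i` times, reflecting,
and differentiating `d` more times leaves a real-rooted quadratic whose coefficients are, up to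
factorials, `p_{i+2}, p_{i+1}, p_i`; its discriminant is nonnegative. For `p = ∏ (X + λⱼ)` of
degree `m` the coefficient `p_j` is `σ_{m-j}(λ)`.
-/

/-- `esymm m k f` : the `k`-th elementary symmetric polynomial of `f 0, …, f (m-1)`. -/
noncomputable def esymm (m k : ℕ) (f : Fin m → ℝ) : ℝ :=
  ∑ s ∈ Finset.univ.powersetCard k, ∏ i ∈ s, f i

open Polynomial Nat

namespace Polynomial

theorem Splits.derivative {p : ℝ[X]} (hp : p.Splits) : p.derivative.Splits := by
  rw [splits_iff_card_roots] at hp ⊢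
  have := card_roots_le_derivative p
  have := card_roots' p.derivative
  have := natDegree_derivative_le p
  omega

theorem Splits.iterate_derivative {p : ℝ[X]} (hp : p.Splits) (k : ℕ) :
    (Polynomial.derivative^[k] p).Splits := by
  induction k with
  | zero => exact hp
  | succ k ih => rw [Function.iterate_succ_apply']; exact ih.derivative

theorem Splits.reverse {K : Type*} [Field K] {p : K[X]} (hp : p.Splits) : p.reverse.Splits := by
  induction hp using Submonoid.closure_induction with
  | mem f hf =>
    obtain ⟨a, rfl⟩ | ⟨a, rfl⟩ := hf
    · simp [Splits.C]
    · exact .of_natDegree_le_one ((reverse_natDegree_le _).trans (natDegree_X_add_C a).le)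
  | one => rw [← C_1, reverse_C]; exact .C 1
  | mul f g _ _ hf hg => rw [reverse_mul_of_domain]; exact hf.mul hg

theorem Splits.reflect {K : Type*} [Field K] {p : K[X]} (hp : p.Splits) {N : ℕ}
    (hN : p.natDegree ≤ N) : (p.reflect N).Splits := by
  have h := reflect_mul p 1 le_rfl (natDegree_one.trans_le (Nat.zero_le (N - p.natDegree)))
  rw [mul_one, Nat.add_sub_cancel' hN, reflect_one] at h
  rw [h]
  exact hp.reverse.mul (.X_pow _)

theorem Splits.discrim_nonneg {K : Type*} [Field K] [LinearOrder K] [IsStrictOrderedRing K]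
    {p : K[X]} (hp : p.Splits) (hdeg : p.natDegree ≤ 2) :
    0 ≤ discrim (p.coeff 2) (p.coeff 1) (p.coeff 0) := by
  rcases eq_or_ne p.natDegree 0 with h0 | h0
  · rw [coeff_eq_zero_of_natDegree_lt (by omega), coeff_eq_zero_of_natDegree_lt (by omega)]
    simp [discrim]
  obtain ⟨x, hx⟩ := hp.exists_eval_eq_zero fun h ↦ h0 (natDegree_eq_of_degree_eq_some h)
  rw [eval_eq_sum_range' (n := 3) (by omega)] at hx
  simp only [Finset.sum_range_succ, Finset.sum_range_zero] at hx
  rw [discrim_eq_sq_of_quadratic_eq_zero (x := x) (by linear_combination hx)]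
  positivity

theorem factorial_mul_coeff_iterate_derivative {R : Type*} [CommSemiring R] (p : R[X])
    (k j : ℕ) :
    (j ! : R) * (derivative^[k] p).coeff j = ((j + k)! : R) * p.coeff (j + k) := by
  rw [coeff_iterate_derivative, nsmul_eq_mul, ← mul_assoc, ← Nat.cast_mul,
    ← Nat.factorial_mul_descFactorial (Nat.le_add_left k j), Nat.add_sub_cancel]

theorem Splits.coeff_mul_coeff_add_two_le_sq {p : ℝ[X]} (hp : p.Splits) {i d : ℕ}
    (hdeg : p.natDegree ≤ i + 2 + d) :
    ((i : ℝ) + 2) * ((d : ℝ) + 2) * (p.coeff i * p.coeff (i + 2)) ≤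
      ((i : ℝ) + 1) * ((d : ℝ) + 1) * p.coeff (i + 1) ^ 2 := by
  set q := Polynomial.derivative^[i] p
  set u := q.reflect (d + 2)
  set r := Polynomial.derivative^[d] u
  have hq_deg : q.natDegree ≤ d + 2 := (natDegree_iterate_derivative p i).trans (by omega)
  have hu_deg : u.natDegree ≤ d + 2 := natDegree_reflect_le.trans (max_le le_rfl hq_deg)
  have hr_deg : r.natDegree ≤ 2 := (natDegree_iterate_derivative u d).trans (by omega)
  have hdisc : 0 ≤ discrim (r.coeff 2) (r.coeff 1) (r.coeff 0) :=
    ((hp.iterate_derivative i).reflect hq_deg |>.iterate_derivative d).discrim_nonneg hr_deg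
  have hcoeff (j : ℕ) (hj : j ≤ 2) :
      (j ! * (2 - j)! : ℝ) * r.coeff j = (d + j)! * (i + (2 - j))! * p.coeff (i + (2 - j)) := by
    rw [mul_comm (j ! : ℝ), mul_assoc, factorial_mul_coeff_iterate_derivative, coeff_reflect,
      revAt_le (by omega), show d + 2 - (j + d) = 2 - j by omega, mul_left_comm,
      factorial_mul_coeff_iterate_derivative, add_comm j, add_comm (2 - j), mul_assoc]
  have hr0 : 2 * r.coeff 0 = d ! * (i + 2)! * p.coeff (i + 2) := by simpa using hcoeff 0 (by omega)
  have hr1 : r.coeff 1 = (d + 1)! * (i + 1)! * p.coeff (i + 1) := by simpa using hcoeff 1 (by omega)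
  have hr2 : 2 * r.coeff 2 = (d + 2)! * i ! * p.coeff i := by simpa using hcoeff 2 (by omega)
  have key : (2 * r.coeff 2) * (2 * r.coeff 0) ≤ r.coeff 1 ^ 2 := by
    rw [discrim] at hdisc; linarith
  rw [hr0, hr1, hr2] at key
  simp only [factorial_succ, cast_mul, cast_add, cast_one] at key
  refine le_of_mul_le_mul_left ?_
    (by positivity : (0 : ℝ) < ((i : ℝ) + 1) * ((d : ℝ) + 1) * ((i ! : ℝ) * d !) ^ 2)
  linear_combination key

end Polynomial

theorem coeff_prod_X_add_C_eq_esymm {m j : ℕ} (hj : j ≤ m) (lam : Fin m → ℝ) :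
    (∏ i, (X + C (lam i))).coeff j = esymm m (m - j) lam := by
  rw [Finset.prod_X_add_C_coeff _ _ (by simpa using hj), Finset.card_univ, Fintype.card_fin]
  rfl

theorem esymm_mul_esymm_sub_two_le {m k : ℕ} (hk : 2 ≤ k) (hkm : k ≤ m) (lam : Fin m → ℝ) :
    (k : ℝ) * (m - k + 2) * (esymm m k lam * esymm m (k - 2) lam) ≤
      (k - 1) * (m - k + 1) * esymm m (k - 1) lam ^ 2 := by
  obtain ⟨a, rfl⟩ : ∃ a, k = a + 2 := ⟨k - 2, by omega⟩
  obtain ⟨d, rfl⟩ : ∃ d, m = d + 2 + a := ⟨m - (a + 2), by omega⟩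
  have hsplits : (∏ i, (X + C (lam i))).Splits := Splits.prod fun i _ ↦ Splits.X_add_C _
  have hdeg : (∏ i, (X + C (lam i))).natDegree ≤ d + 2 + a :=
    (natDegree_prod_le _ _).trans (by simp)
  have h := hsplits.coeff_mul_coeff_add_two_le_sq hdeg
  rw [coeff_prod_X_add_C_eq_esymm (by omega), coeff_prod_X_add_C_eq_esymm (by omega),
    coeff_prod_X_add_C_eq_esymm (by omega), show d + 2 + a - d = a + 2 by omega,
    show d + 2 + a - (d + 2) = a by omega, show d + 2 + a - (d + 1) = a + 1 by omega] at h
  rw [show a + 2 - 2 = a by omega, show a + 2 - 1 = a + 1 by omega]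
  push_cast
  linear_combination h

/-- Newton's inequality for `(n-1)`-tuples. -/
theorem newton_ineq (n k : ℕ) (hk : 2 ≤ k) (hkn : k ≤ n - 1) (lam : Fin (n - 1) → ℝ) :
    esymm (n - 1) k lam * esymm (n - 1) (k - 2) lam ≤
      (((k : ℝ) - 1) * ((n : ℝ) - k)) / ((k : ℝ) * ((n : ℝ) - k + 1)) *
        (esymm (n - 1) (k - 1) lam) ^ 2 := by
  have h := esymm_mul_esymm_sub_two_le hk hkn lam
  rw [Nat.cast_sub (by omega), Nat.cast_one] at h
  have hk' : (2 : ℝ) ≤ k := by exact_mod_cast hk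
  have hkn' : (k : ℝ) + 1 ≤ n := by exact_mod_cast (show k + 1 ≤ n by omega)
  have hpos : (0 : ℝ) < k * (n - k + 1) := mul_pos (by linarith) (by linarith)
  rw [div_mul_eq_mul_div, le_div_iff₀ hpos]
  linear_combination h
end

section
/- Let c_k,…,c_n > 0, α > 0 with α < (1/(16(n−k)² + 4(n−k+1))) · min_{k≤j≤n} (c_j/(2σ)) for some σ > 0, and define P¹(y'') = (1/12)·Σ_{i=k}^n [c_i/σ − 4α(n−k)]·y_i⁴ + α·Σ_{j=k}^n Σ_{i=k, i≠j}^n y_i² y_j² on ℝ^{n−k+1}. Then for all y'' and each fixed j₀ with k ≤ j₀ ≤ n, the second derivative satisfies P¹_{j₀j₀}(y'') ≥ 2α|y''|² + Σ_{i≠j₀} |P¹_{i j₀}(y'')|; in particular the Hessian matrix (P¹_{ij}(y''))_{k≤i,j≤n} is strictly diagonally dominant whenever y'' ≠ 0. -/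
/-- The model quartic `P¹(y'') = (1/12)∑ᵢ [cᵢ/σ − 4α(m−1)] yᵢ⁴ + α ∑_{j}∑_{i≠j} yᵢ²yⱼ²`,
in `m = n−k+1` variables (so `m − 1 = n − k`). -/
noncomputable def P1 (m : ℕ) (c : Fin m → ℝ) (σ α : ℝ) : (Fin m → ℝ) → ℝ :=
  fun y => (1 / 12) * ∑ i, (c i / σ - 4 * α * ((m : ℝ) - 1)) * (y i) ^ 4
    + α * ∑ j, ∑ i ∈ Finset.univ.erase j, (y i) ^ 2 * (y j) ^ 2

/-- Second partial derivative `∂²f/∂yᵢ∂yⱼ`. -/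
noncomputable def D2 (m : ℕ) (f : (Fin m → ℝ) → ℝ) (y : Fin m → ℝ) (i j : Fin m) : ℝ :=
  fderiv ℝ (fun x => fderiv ℝ f x (Pi.single i 1)) y (Pi.single j 1)

/-!
Since `∑ⱼ ∑_{i≠j} yᵢ²yⱼ² = |y|⁴ − ∑ᵢ yᵢ⁴`, `P¹` is a diagonal quartic plus `α|y|⁴`, so its Hessian is
`diag((aᵢ − 12α)yᵢ² + 4α|y|²) + 8α y yᵀ` with `aᵢ = cᵢ/σ − 4α(m−1)`. The AM-GM bound
`8α|yᵢyⱼ| ≤ 2α(4yⱼ² + yᵢ²)` on the off-diagonal entries of column `j` reduces dominance to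
`α(12(m−1) + 2) ≤ cⱼ/σ`, and the smallness of `α` gives this since
`12t + 2 ≤ 2(16t² + 4t + 4)` for `t = m − 1`.
-/

open Finset

theorem sum_sum_erase_mul_eq {ι R : Type*} [Fintype ι] [DecidableEq ι] [CommRing R] (f : ι → R) :
    ∑ j, ∑ i ∈ univ.erase j, f i * f j = (∑ i, f i) ^ 2 - ∑ i, f i ^ 2 := by
  rw [sq, sum_mul_sum, eq_sub_iff_add_eq, ← sum_add_distrib, sum_comm]
  exact sum_congr rfl fun j _ => by rw [← sum_erase_add _ _ (mem_univ j), sq]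

lemma mul_coeff_lt_div {m c σ α : ℝ} (hα : 0 ≤ α)
    (h : α < 1 / (16 * (m - 1) ^ 2 + 4 * m) * (c / (2 * σ))) :
    α * (12 * (m - 1) + 2) < c / σ := by
  have hK : 0 < 16 * (m - 1) ^ 2 + 4 * m := by nlinarith [sq_nonneg (4 * m - 7 / 2)]
  rw [one_div_mul_eq_div, lt_div_iff₀ hK] at h
  have hc : c / σ = 2 * (c / (2 * σ)) := by ring
  nlinarith [mul_nonneg hα (sq_nonneg (8 * (m - 1) - 1))]

section
variable {m : ℕ}

noncomputable def quartic (b : Fin m → ℝ) (α : ℝ) (y : Fin m → ℝ) : ℝ :=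
  ∑ i, b i * y i ^ 4 + α * (∑ i, y i ^ 2) ^ 2

lemma hasFDerivAt_sum_sq (x : Fin m → ℝ) :
    HasFDerivAt (fun y : Fin m → ℝ => ∑ i, y i ^ 2)
      (∑ i, (2 * x i) • ContinuousLinearMap.proj (R := ℝ) (φ := fun _ : Fin m => ℝ) i) x := by
  refine HasFDerivAt.fun_sum fun i _ => ?_
  simpa using (hasFDerivAt_apply (𝕜 := ℝ) i x).pow 2

lemma fderiv_quartic_apply_single (b : Fin m → ℝ) (α : ℝ) (x : Fin m → ℝ) (i : Fin m) :
    fderiv ℝ (quartic b α) x (Pi.single i 1) =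
      4 * b i * x i ^ 3 + 4 * α * (x i * ∑ k, x k ^ 2) := by
  have h : HasFDerivAt (quartic b α) _ x :=
    (HasFDerivAt.fun_sum (u := univ) fun k _ =>
      ((hasFDerivAt_apply (𝕜 := ℝ) k x).pow 4).const_mul (b k)).add
      (((hasFDerivAt_sum_sq x).pow 2).const_mul α)
  rw [h.fderiv]
  simp only [Nat.add_one_sub_one, nsmul_eq_mul, Nat.cast_ofNat, pow_one, add_apply,
    _root_.sum_apply, smul_apply, ContinuousLinearMap.proj_apply, Pi.single_apply, smul_eq_mul,
    mul_ite, mul_one, mul_zero, sum_ite_eq', mem_univ, ↓reduceIte]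
  ring

lemma D2_quartic (b : Fin m → ℝ) (α : ℝ) (y : Fin m → ℝ) (i j : Fin m) :
    D2 m (quartic b α) y i j =
      (if i = j then 12 * b i * y i ^ 2 + 4 * α * ∑ k, y k ^ 2 else 0) + 8 * α * y i * y j := by
  have h : HasFDerivAt (fun x => 4 * b i * x i ^ 3 + 4 * α * (x i * ∑ k, x k ^ 2)) _ y :=
    (((hasFDerivAt_apply (𝕜 := ℝ) i y).pow 3).const_mul (4 * b i)).add
      (((hasFDerivAt_apply (𝕜 := ℝ) i y).mul (hasFDerivAt_sum_sq y)).const_mul (4 * α))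
  rw [D2, funext (fderiv_quartic_apply_single b α · i), h.fderiv]
  simp only [Nat.add_one_sub_one, nsmul_eq_mul, Nat.cast_ofNat, smul_add, add_apply, smul_apply,
    ContinuousLinearMap.proj_apply, Pi.single_apply, smul_eq_mul, mul_ite, mul_one, mul_zero,
    _root_.sum_apply, sum_ite_eq', mem_univ, ↓reduceIte]
  split_ifs <;> ring

lemma P1_eq_quartic (c : Fin m → ℝ) (σ α : ℝ) :
    P1 m c σ α = quartic (fun i => (c i / σ - 4 * α * ((m : ℝ) - 1) - 12 * α) / 12) α := by
  funext y
  rw [P1, quartic, sum_sum_erase_mul_eq (fun i => y i ^ 2)]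
  have hterm : ∀ i, (c i / σ - 4 * α * ((m : ℝ) - 1) - 12 * α) / 12 * y i ^ 4 =
      1 / 12 * ((c i / σ - 4 * α * ((m : ℝ) - 1)) * y i ^ 4) - α * (y i ^ 2) ^ 2 :=
    fun i => by ring
  rw [sum_congr rfl fun i _ => hterm i, sum_sub_distrib, ← mul_sum, ← mul_sum]
  ring

lemma D2_P1 (c : Fin m → ℝ) (σ α : ℝ) (y : Fin m → ℝ) (i j : Fin m) :
    D2 m (P1 m c σ α) y i j =
      (if i = j then (c i / σ - 4 * α * ((m : ℝ) - 1) - 12 * α) * y i ^ 2 + 4 * α * ∑ k, y k ^ 2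
        else 0) + 8 * α * y i * y j := by
  rw [P1_eq_quartic, D2_quartic]
  congr 2
  ring

lemma sum_erase_abs_mul_le (y : Fin m → ℝ) (j : Fin m) :
    ∑ i ∈ univ.erase j, 4 * |y i * y j| ≤
      4 * ((m : ℝ) - 1) * y j ^ 2 + (∑ i, y i ^ 2 - y j ^ 2) := by
  calc ∑ i ∈ univ.erase j, 4 * |y i * y j|
      ≤ ∑ i ∈ univ.erase j, (4 * y j ^ 2 + y i ^ 2) := sum_le_sum fun i _ => by
        rw [abs_mul]; nlinarith [sq_nonneg (|y i| - 2 * |y j|), sq_abs (y i), sq_abs (y j)]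
    _ = _ := by
        rw [sum_erase_eq_sub (mem_univ j), sum_add_distrib, sum_const, card_univ,
          Fintype.card_fin, nsmul_eq_mul]
        ring

lemma P1_diag_dominance (c : Fin m → ℝ) (σ α : ℝ) (hα : 0 ≤ α) (y : Fin m → ℝ) (j : Fin m)
    (hαsmall : α < 1 / (16 * ((m : ℝ) - 1) ^ 2 + 4 * (m : ℝ)) * (c j / (2 * σ))) :
    2 * α * ∑ i, y i ^ 2 + ∑ i ∈ univ.erase j, |D2 m (P1 m c σ α) y i j| ≤
      D2 m (P1 m c σ α) y j j := by
  have hoff : ∀ i ∈ univ.erase j, |D2 m (P1 m c σ α) y i j| = 2 * α * (4 * |y i * y j|) := by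
    intro i hi
    rw [D2_P1, if_neg (ne_of_mem_erase hi), zero_add, mul_assoc, abs_mul,
      abs_of_nonneg (by positivity : (0 : ℝ) ≤ 8 * α)]
    ring
  rw [sum_congr rfl hoff, ← mul_sum, D2_P1, if_pos rfl]
  have hoff_le :=
    mul_le_mul_of_nonneg_left (sum_erase_abs_mul_le y j) (by positivity : 0 ≤ 2 * α)
  have hdiag := mul_le_mul_of_nonneg_right (mul_coeff_lt_div hα hαsmall).le (sq_nonneg (y j))
  linarith

end

theorem P1_hessian_diag_dominant_general (m : ℕ) (c : Fin m → ℝ) (σ α : ℝ)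
    (hα : 0 < α)
    (hαsmall : ∀ j : Fin m,
      α < 1 / (16 * ((m : ℝ) - 1) ^ 2 + 4 * (m : ℝ)) * (c j / (2 * σ))) :
    (∀ (y : Fin m → ℝ) (j₀ : Fin m),
      2 * α * (∑ i, (y i) ^ 2) + ∑ i ∈ Finset.univ.erase j₀, |D2 m (P1 m c σ α) y i j₀| ≤
        D2 m (P1 m c σ α) y j₀ j₀) ∧
    (∀ y : Fin m → ℝ, y ≠ 0 → ∀ j₀ : Fin m,
      ∑ i ∈ Finset.univ.erase j₀, |D2 m (P1 m c σ α) y i j₀| < D2 m (P1 m c σ α) y j₀ j₀) := by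
  have hdom y j₀ := P1_diag_dominance c σ α hα.le y j₀ (hαsmall j₀)
  refine ⟨hdom, fun y hy j₀ => ?_⟩
  have hQ : 0 < ∑ i, y i ^ 2 :=
    Fintype.sum_pos <| lt_of_le_of_ne (fun i => sq_nonneg (y i)) fun h =>
      hy <| funext fun i => by simpa using congr_fun h.symm i
  linarith [hdom y j₀, mul_pos (mul_pos two_pos hα) hQ]

theorem P1_hessian_diag_dominant (m : ℕ) (c : Fin m → ℝ) (σ α : ℝ)
    (hσ : 0 < σ) (hc : ∀ i, 0 < c i) (hα : 0 < α)
    (hαsmall : ∀ j : Fin m,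
      α < 1 / (16 * ((m : ℝ) - 1) ^ 2 + 4 * (m : ℝ)) * (c j / (2 * σ))) :
    (∀ (y : Fin m → ℝ) (j₀ : Fin m),
      2 * α * (∑ i, (y i) ^ 2) + ∑ i ∈ Finset.univ.erase j₀, |D2 m (P1 m c σ α) y i j₀| ≤
        D2 m (P1 m c σ α) y j₀ j₀) ∧
    (∀ y : Fin m → ℝ, y ≠ 0 → ∀ j₀ : Fin m,
      ∑ i ∈ Finset.univ.erase j₀, |D2 m (P1 m c σ α) y i j₀| < D2 m (P1 m c σ α) y j₀ j₀) :=
  P1_hessian_diag_dominant_general m c σ α hα hαsmall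
end
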